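/- Let n ≥ 2 and consider real variables W²(1),…,W²(n), W⁶(1),…,W⁶(n), W⁴(2),…,W⁴(n) (in that column order). Form the matrix M of the linear constraint system consisting of: (i) for each j = 2,…,n the row encoding W²(j) − W²(j−1) − W⁴(j) ≤ 0; (ii) for each j = 1,…,n the row encoding W⁶(j) − W²(j) ≤ 0; (iii) for each of the 3n−1 variables the two rows encoding the bound constraints W ≤ 1 and −W ≤ 0 (i.e., the identity matrix and its negation appended as rows). Then M is totally unimodular. -/

import Mathlib

/-!
Drop the `W⁴` columns: every row of (C1) and (C2) then has exactly one `1` and one `-1`, so the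
transpose is the incidence matrix of a directed graph. Such a matrix is totally unimodular:
in a square submatrix either some column meets only one endpoint of its arc, and Laplace
expansion along it reduces to a smaller submatrix, or every column meets both or neither, and
the rows sum to zero. Since `W⁴(j+1)` occurs only in row `j` of (C1), the `W⁴` columns and the
bound rows are signed unit vectors, and appending those preserves total unimodularity.
-/

theorem Fintype.sum_ite_eq_ite_mem_range {ι α R : Type*} [Fintype ι] [DecidableEq α]
    [AddCommMonoidWithOne R] {f : ι → α} (hf : f.Injective) (a : α) :
    ∑ i, (if f i = a then (1 : R) else 0) = if a ∈ Set.range f then 1 else 0 := by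
  by_cases ha : a ∈ Set.range f
  · obtain ⟨y, rfl⟩ := ha
    rw [Fintype.sum_eq_single y fun i hi => if_neg (hf.ne hi), if_pos rfl, if_pos ⟨y, rfl⟩]
  · rw [if_neg ha]
    exact Finset.sum_eq_zero fun i _ => if_neg fun hi => ha ⟨i, hi⟩

namespace Matrix

variable {ι m n n' R : Type*} [CommRing R]

lemma det_eq_zero_of_sum_rows_eq_zero [Fintype n] [DecidableEq n] {A : Matrix n n R} (j : n)
    (h : ∀ c, ∑ i, A i c = 0) : A.det = 0 := by
  have hrow := det_updateRow_sum A j 1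
  simp only [Pi.one_apply, one_smul] at hrow
  rw [← hrow]
  exact det_eq_zero_of_row_eq_zero j fun c => by
    rw [updateRow_self]
    exact (Finset.sum_apply c _ _).trans (h c)

lemma det_mem_range_signType_cast_of_col_eq_single {k : ℕ}
    {S : Matrix (Fin (k + 1)) (Fin (k + 1)) R} {x y : Fin (k + 1)} {s : SignType}
    (hx : (fun i => S i x) = Pi.single y (s : R))
    (hminor : (S.submatrix y.succAbove x.succAbove).det ∈ Set.range SignType.cast) :
    S.det ∈ Set.range SignType.cast := by
  rw [det_succ_column S x, Fintype.sum_eq_single y fun i hi => by simp [congrFun hx i, hi]]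
  change _ ∈ MonoidHom.mrange SignType.castHom.toMonoidHom
  have hneg : (-1 : R) ∈ MonoidHom.mrange SignType.castHom.toMonoidHom := ⟨-1, by simp⟩
  exact mul_mem (mul_mem (pow_mem hneg _) ⟨s, by simp [congrFun hx y]⟩) hminor

lemma IsTotallyUnimodular.fromCols_unitlike [DecidableEq m] {A : Matrix m n R}
    {B : Matrix m n' R} (hA : A.IsTotallyUnimodular)
    (hB : Nonempty m → ∀ j : n', ∃ i : m, ∃ s : SignType, (fun i => B i j) = Pi.single i s.cast) :
    (fromCols A B).IsTotallyUnimodular := by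
  rw [← transpose_isTotallyUnimodular_iff, transpose_fromCols]
  exact hA.transpose.fromRows_unitlike hB

variable [DecidableEq m]

def directedIncidence (head tail : n → m) : Matrix m n R :=
  of fun i j => (if i = head j then 1 else 0) - (if i = tail j then 1 else 0)

section RowSelection

variable {head tail : n → m} {f : ι → m}

lemma sum_directedIncidence_comp [Fintype ι] (hf : f.Injective) (j : n) :
    ∑ i, directedIncidence head tail (f i) j =
      (if head j ∈ Set.range f then (1 : R) else 0) - (if tail j ∈ Set.range f then 1 else 0) := by
  simp only [directedIncidence, of_apply, Finset.sum_sub_distrib]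
  rw [Fintype.sum_ite_eq_ite_mem_range hf, Fintype.sum_ite_eq_ite_mem_range hf]

lemma directedIncidence_comp_eq_single_of_head [DecidableEq ι] (hf : f.Injective) {j : n} {y : ι}
    (hy : f y = head j) (ht : tail j ∉ Set.range f) :
    (fun i => directedIncidence head tail (f i) j) = Pi.single y (1 : R) := by
  funext i
  have hit : f i ≠ tail j := fun hi => ht ⟨i, hi⟩
  by_cases hiy : i = y
  · subst hiy
    simp [directedIncidence, hy, hy ▸ hit]
  · simp [directedIncidence, hit, hiy, ← hy, hf.ne hiy]

lemma directedIncidence_comp_eq_single_of_tail [DecidableEq ι] (hf : f.Injective) {j : n} {y : ι}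
    (hy : f y = tail j) (hh : head j ∉ Set.range f) :
    (fun i => directedIncidence head tail (f i) j) = Pi.single y (-1 : R) := by
  funext i
  have hih : f i ≠ head j := fun hi => hh ⟨i, hi⟩
  by_cases hiy : i = y
  · subst hiy
    simp [directedIncidence, hy, hy ▸ hih]
  · simp [directedIncidence, hih, hiy, ← hy, hf.ne hiy]

end RowSelection

theorem directedIncidence_isTotallyUnimodular (head tail : n → m) :
    (directedIncidence head tail : Matrix m n R).IsTotallyUnimodular := by
  intro k
  induction k with
  | zero => intro f g _ _; exact ⟨1, by simp⟩
  | succ k ih =>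
    intro f g hf hg
    have hminor (x y : Fin (k + 1)) :
        (((directedIncidence head tail).submatrix f g).submatrix y.succAbove x.succAbove).det ∈
          Set.range (SignType.cast : SignType → R) := by
      rw [submatrix_submatrix]
      exact ih _ _ (hf.comp Fin.succAbove_right_injective) (hg.comp Fin.succAbove_right_injective)
    by_cases hh : ∃ x y, f y = head (g x) ∧ tail (g x) ∉ Set.range f
    · obtain ⟨x, y, hy, ht⟩ := hh
      exact det_mem_range_signType_cast_of_col_eq_single (s := 1)
        (by simpa using directedIncidence_comp_eq_single_of_head hf hy ht) (hminor x y)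
    by_cases ht : ∃ x y, f y = tail (g x) ∧ head (g x) ∉ Set.range f
    · obtain ⟨x, y, hy, hh⟩ := ht
      exact det_mem_range_signType_cast_of_col_eq_single (s := -1)
        (by simpa using directedIncidence_comp_eq_single_of_tail hf hy hh) (hminor x y)
    refine ⟨0, (det_eq_zero_of_sum_rows_eq_zero 0 ?_).symm⟩
    intro x
    simp only [not_exists, not_and, not_not] at hh ht
    have hmem : head (g x) ∈ Set.range f ↔ tail (g x) ∈ Set.range f :=
      ⟨fun ⟨y, hy⟩ => hh x y hy, fun ⟨y, hy⟩ => ht x y hy⟩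
    change ∑ i, directedIncidence head tail (f i) (g x) = 0
    rw [sum_directedIncidence_comp hf]
    simp only [hmem, sub_self]

end Matrix

open Matrix

/-- Rows (C1) and (C2) with the `W⁴` entries removed, as arcs on the vertices `W² ⊕ W⁶`:
(C1) row `j` is the arc `W²(j) → W²(j+1)` and (C2) row `j` the arc `W²(j) → W⁶(j)`. -/
def powerPlantHead (n : ℕ) : Fin (n - 1) ⊕ Fin n → Fin n ⊕ Fin n
  | .inl j => .inl ⟨j + 1, Nat.add_lt_of_lt_sub j.isLt⟩
  | .inr j => .inr j

def powerPlantTail (n : ℕ) : Fin (n - 1) ⊕ Fin n → Fin n ⊕ Fin n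
  | .inl j => .inl (Fin.castLE (Nat.sub_le n 1) j)
  | .inr j => .inl j

theorem constraint_matrix_isTotallyUnimodular (n : ℕ) :
    (Matrix.of fun
        (r : (Fin (n - 1) ⊕ Fin n) ⊕
          ((Fin n ⊕ Fin n ⊕ Fin (n - 1)) ⊕ (Fin n ⊕ Fin n ⊕ Fin (n - 1))))
        (c : Fin n ⊕ Fin n ⊕ Fin (n - 1)) =>
      match r, c with
      -- (C1), row j (for time j+1): `W²(j+1) − W²(j) − W⁴(j+1) ≤ 0` (0-based indexing)
      | Sum.inl (Sum.inl j), Sum.inl k =>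
          if (k : ℕ) = (j : ℕ) + 1 then (1 : ℚ) else if (k : ℕ) = (j : ℕ) then -1 else 0
      | Sum.inl (Sum.inl _), Sum.inr (Sum.inl _) => 0
      | Sum.inl (Sum.inl j), Sum.inr (Sum.inr k) => if k = j then -1 else 0
      -- (C2), row j: `W⁶(j) − W²(j) ≤ 0`
      | Sum.inl (Sum.inr j), Sum.inl k => if k = j then -1 else 0
      | Sum.inl (Sum.inr j), Sum.inr (Sum.inl k) => if k = j then 1 else 0
      | Sum.inl (Sum.inr _), Sum.inr (Sum.inr _) => 0
      -- (C3): bound rows `x ≤ 1` (identity rows) and `−x ≤ 0` (negated identity rows)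
      | Sum.inr (Sum.inl c'), c => if c = c' then 1 else 0
      | Sum.inr (Sum.inr c'), c => if c = c' then -1 else 0).IsTotallyUnimodular := by
  have hC : (fromCols (directedIncidence (powerPlantHead n) (powerPlantTail n))ᵀ
      (of fun r k => if r = Sum.inl k then (-1 : ℚ) else 0)).IsTotallyUnimodular :=
    (directedIncidence_isTotallyUnimodular _ _).transpose.fromCols_unitlike fun _ k =>
      ⟨.inl k, .neg, by funext r; simp [Pi.single_apply]⟩
  have hM := (hC.submatrix id (Equiv.sumAssoc _ _ _).symm).fromRows_unitlike
    (B := fromRows (1 : Matrix _ _ ℚ) (-1)) fun _ => by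
      rintro (c | c)
      · exact ⟨c, .pos, by funext r; simp [one_apply, Pi.single_apply, eq_comm]⟩
      · exact ⟨c, .neg, by funext r; simp [one_apply, Pi.single_apply, eq_comm, neg_ite]⟩
  convert hM using 1
  ext ((j | j) | (c | c)) (k | k | k) <;>
    simp [directedIncidence, powerPlantHead, powerPlantTail, one_apply, Fin.ext_iff, eq_comm,
      neg_ite]
  grind
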